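/- The five-term Machin-like formula arising from the alternative iterative method: π/4 = 8·( arctan(1/10) - arctan(1/684) - arctan(1/701102) - arctan(1/983087327708) ) - arctan( 1033248635280959 / 4239006656613482881 ). -/

import Mathlib

/-!
Subtracting the three small arctangents from `arctan (1/10)` leaves exactly `arctan (20/203)`.
Doubling `20/203` three times with `tan 2θ = 2 tan θ / (1 - tan² θ)` stays inside `(-1, 1)` and
gives `8 · arctan (20/203) = arctan t` with `t` slightly above `1`, and the last term of the
formula is `arctan ((t - 1)/(t + 1)) = arctan t - arctan 1`.
-/

open Real

theorem Real.arctan_sub_arctan {x y : ℝ} (h : -1 < x * y) :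
    arctan x - arctan y = arctan ((x - y) / (1 + x * y)) := by
  rw [sub_eq_add_neg, ← arctan_neg, arctan_add (by linarith)]
  ring_nf

lemma arctan_differences_eq :
    arctan (1 / 10) - arctan (1 / 684) - arctan (1 / 701102) - arctan (1 / 983087327708) =
      arctan (20 / 203) := by
  rw [arctan_sub_arctan (by norm_num), arctan_sub_arctan (by norm_num),
    arctan_sub_arctan (by norm_num)]
  norm_num

lemma eight_mul_arctan_twenty_div_two_hundred_three :
    8 * arctan (20 / 203) = arctan (2120019952624381920 / 2118986703989100961) := by
  have h₁ : 2 * arctan (20 / 203) = arctan (8120 / 40809) := by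
    rw [two_mul_arctan (by norm_num) (by norm_num)]
    norm_num
  have h₂ : 2 * arctan (8120 / 40809) = arctan (662738160 / 1599440081) := by
    rw [two_mul_arctan (by norm_num) (by norm_num)]
    norm_num
  have h₃ : 2 * arctan (662738160 / 1599440081) =
      arctan (2120019952624381920 / 2118986703989100961) := by
    rw [two_mul_arctan (by norm_num) (by norm_num)]
    norm_num
  rw [show (8 : ℝ) = 2 * (2 * 2) by norm_num, mul_assoc, mul_assoc, h₁, h₂, h₃]

theorem alternative_method_formula :
    Real.pi / 4 =
      8 * (Real.arctan (1 / 10) - Real.arctan (1 / 684) - Real.arctan (1 / 701102) -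
          Real.arctan (1 / 983087327708)) -
        Real.arctan (1033248635280959 / 4239006656613482881) := by
  rw [arctan_differences_eq, eight_mul_arctan_twenty_div_two_hundred_three, ← arctan_one,
    arctan_sub_arctan (by norm_num)]
  norm_num
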